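/- arXiv:2207.07080 — 2 statements merged into one kernel-verified Lean document; each statement's English description precedes it below -/
import Mathlib

section
/- Any function L: ℕ₊ → ℝ that is non-decreasing, satisfies L(n^m) = m·L(n) for all positive integers n, m, and satisfies L(2) = 1, must equal L(n) = log₂(n) for all n ≥ 1. -/
/-!
Both `L` and `log₂` are monotone, send `2 ^ k` to `k`, and turn powers into multiples. Monotonicity
pins any such function on `x ≥ 1` into `[⌊log₂ x⌋, ⌊log₂ x⌋ + 1]`, so `m * L n` and `m * log₂ n`,
the values at `n ^ m`, lie in a common interval of length one. Letting `m → ∞` gives `L n = log₂ n`.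
-/

open Set

lemma eq_of_forall_abs_mul_sub_mul_le_one {a b : ℝ} (h : ∀ m : ℕ, 1 ≤ m → |m * a - m * b| ≤ 1) :
    a = b := by
  refine eq_of_forall_dist_le fun ε hε => ?_
  obtain ⟨m, hm⟩ := exists_nat_gt ε⁻¹
  have hm_pos : (0 : ℝ) < m := (inv_pos.mpr hε).trans hm
  have hbound : m * |a - b| ≤ 1 := by
    rw [← abs_of_pos hm_pos, ← abs_mul, mul_sub]
    exact h m (Nat.cast_pos.mp hm_pos)
  rw [inv_lt_iff_one_lt_mul₀ hε] at hm
  rw [Real.dist_eq]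
  nlinarith

lemma apply_pow_eq_of_apply_eq_one {f : ℕ → ℝ} {b : ℕ} (hb : 1 ≤ b)
    (hpow : ∀ n m : ℕ, 1 ≤ n → 1 ≤ m → f (n ^ m) = m * f n) (hfb : f b = 1) (k : ℕ) :
    f (b ^ k) = k := by
  rcases Nat.eq_zero_or_pos k with rfl | hk
  · have h : f 1 = 2 * f 1 := by simpa using hpow 1 2 le_rfl one_le_two
    rw [pow_zero, Nat.cast_zero]
    linarith
  · rw [hpow b k hb hk, hfb, mul_one]

lemma apply_mem_Icc_log_of_monotoneOn {f : ℕ → ℝ} {b : ℕ} (hb : 1 < b)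
    (hf : MonotoneOn f (Ici 1)) (hfb : ∀ k : ℕ, f (b ^ k) = k) {x : ℕ} (hx : 1 ≤ x) :
    f x ∈ Icc (Nat.log b x : ℝ) (Nat.log b x + 1) := by
  have hbk : ∀ k, b ^ k ∈ Ici 1 := fun k => Nat.one_le_pow k b (by omega)
  constructor
  · calc (Nat.log b x : ℝ) = f (b ^ Nat.log b x) := (hfb _).symm
      _ ≤ f x := hf (hbk _) hx (Nat.pow_log_le_self b (by omega))
  · calc f x ≤ f (b ^ (Nat.log b x + 1)) := hf hx (hbk _) (Nat.lt_pow_succ_log_self hb x).le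
      _ = Nat.log b x + 1 := by rw [hfb]; push_cast; rfl

theorem eq_of_monotoneOn_of_apply_pow {f g : ℕ → ℝ} {b : ℕ} (hb : 1 < b)
    (hf : MonotoneOn f (Ici 1)) (hg : MonotoneOn g (Ici 1))
    (hfb : ∀ k : ℕ, f (b ^ k) = k) (hgb : ∀ k : ℕ, g (b ^ k) = k)
    (hfpow : ∀ n m : ℕ, 1 ≤ n → 1 ≤ m → f (n ^ m) = m * f n)
    (hgpow : ∀ n m : ℕ, 1 ≤ n → 1 ≤ m → g (n ^ m) = m * g n) {n : ℕ} (hn : 1 ≤ n) :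
    f n = g n := by
  refine eq_of_forall_abs_mul_sub_mul_le_one fun m hm => ?_
  have hnm : 1 ≤ n ^ m := Nat.one_le_pow m n hn
  rw [← hfpow n m hn hm, ← hgpow n m hn hm]
  obtain ⟨hf_lo, hf_hi⟩ := apply_mem_Icc_log_of_monotoneOn hb hf hfb hnm
  obtain ⟨hg_lo, hg_hi⟩ := apply_mem_Icc_log_of_monotoneOn hb hg hgb hnm
  exact abs_sub_le_iff.mpr ⟨by linarith, by linarith⟩

/-- A non-decreasing function on positive integers with L(n^m) = m·L(n) and L(2) = 1
must be log₂. -/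
theorem eq_logb_of_axioms (L : ℕ → ℝ)
    (hmono : ∀ n, 1 ≤ n → L n ≤ L (n + 1))
    (hpow : ∀ n m : ℕ, 1 ≤ n → 1 ≤ m → L (n ^ m) = (m : ℝ) * L n)
    (h2 : L 2 = 1) :
    ∀ n, 1 ≤ n → L n = Real.logb 2 n := by
  intro n hn
  have hlogb_mono : MonotoneOn (fun x : ℕ => Real.logb 2 x) (Ici 1) := fun x hx _ _ hxy =>
    Real.logb_le_logb_of_le one_lt_two (by exact_mod_cast hx) (by exact_mod_cast hxy)
  have hlogb_pow (x m : ℕ) : Real.logb 2 ((x ^ m : ℕ) : ℝ) = m * Real.logb 2 x := by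
    rw [Nat.cast_pow, Real.logb_pow]
  refine eq_of_monotoneOn_of_apply_pow one_lt_two (monotoneOn_nat_Ici_of_le_succ hmono)
    hlogb_mono (apply_pow_eq_of_apply_eq_one one_le_two hpow h2) (fun k => ?_) hpow
    (fun x m _ _ => hlogb_pow x m) hn
  rw [hlogb_pow, Nat.cast_ofNat, Real.logb_self_eq_one one_lt_two, mul_one]
end

section
/- For all positive integers n ≥ 2 and m ≥ 1, if k = ⌊m log₂ n⌋, then |m·log₂(n) − k| ≤ 1 and 2^k ≤ n^m ≤ 2^{k+1}; consequently any function L satisfying monotonicity, L(n^m)=mL(n), and L(2^k)=k satisfies |L(n) − log₂(n)| ≤ 1/m for every m, hence L(n) = log₂(n). -/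
/-!
Put `k = Nat.log 2 N`, so that `2 ^ k ≤ N < 2 ^ (k + 1)`. Monotonicity and `L (2 ^ k) = k` trap
`L N` in `[k, k + 1]`, and `log₂ N` lies there too, so `|L N - log₂ N| ≤ 1`. For `N = n ^ m` both
sides scale by `m`, giving `|L n - log₂ n| ≤ 1 / m` for every `m`.
-/

open Real

theorem natFloor_mul_logb_eq_log_pow (b n m : ℕ) :
    ⌊(m : ℝ) * logb b n⌋₊ = Nat.log b (n ^ m) := by
  rw [← logb_pow, ← Nat.cast_pow, natFloor_logb_natCast]

theorem abs_sub_natFloor_le_one {x : ℝ} (hx : 0 ≤ x) : |x - ⌊x⌋₊| ≤ 1 := by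
  rw [abs_of_nonneg (sub_nonneg.2 (Nat.floor_le hx))]
  linarith [Nat.lt_floor_add_one x]

theorem natLog_le_logb_two_le_natLog_add_one {N : ℕ} (hN : 1 ≤ N) :
    (Nat.log 2 N : ℝ) ≤ logb 2 N ∧ logb 2 N ≤ Nat.log 2 N + 1 := by
  have hfloor : ⌊logb 2 (N : ℝ)⌋₊ = Nat.log 2 N := by
    exact_mod_cast natFloor_logb_natCast 2 N
  have hlogb : 0 ≤ logb 2 (N : ℝ) := logb_nonneg one_lt_two (by exact_mod_cast hN)
  rw [← hfloor]
  exact ⟨Nat.floor_le hlogb, (Nat.lt_floor_add_one _).le⟩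

theorem eq_of_forall_abs_sub_le_one_div {a b : ℝ} (h : ∀ m : ℕ, 1 ≤ m → |a - b| ≤ 1 / m) :
    a = b := by
  refine eq_of_forall_dist_le fun ε hε => ?_
  obtain ⟨m, hm⟩ := exists_nat_one_div_lt hε
  calc dist a b = |a - b| := dist_eq a b
    _ ≤ 1 / (m + 1 : ℕ) := h (m + 1) (by omega)
    _ ≤ ε := by push_cast; exact hm.le

section LogLike

variable {L : ℕ → ℝ}

theorem natLog_le_apply_le_natLog_add_one (hmono : ∀ a b : ℕ, 1 ≤ a → a ≤ b → L a ≤ L b)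
    (h2pow : ∀ k : ℕ, L (2 ^ k) = k) {N : ℕ} (hN : 1 ≤ N) :
    (Nat.log 2 N : ℝ) ≤ L N ∧ L N ≤ Nat.log 2 N + 1 := by
  have hlow := hmono _ _ Nat.one_le_two_pow (Nat.pow_log_le_self 2 (by omega : N ≠ 0))
  have hhigh := hmono _ _ hN (Nat.lt_pow_succ_log_self one_lt_two N).le
  rw [h2pow] at hlow hhigh
  push_cast at hhigh
  exact ⟨hlow, hhigh⟩

theorem abs_apply_sub_logb_le_one (hmono : ∀ a b : ℕ, 1 ≤ a → a ≤ b → L a ≤ L b)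
    (h2pow : ∀ k : ℕ, L (2 ^ k) = k) {N : ℕ} (hN : 1 ≤ N) : |L N - logb 2 N| ≤ 1 := by
  obtain ⟨hL₁, hL₂⟩ := natLog_le_apply_le_natLog_add_one hmono h2pow hN
  obtain ⟨hb₁, hb₂⟩ := natLog_le_logb_two_le_natLog_add_one hN
  rw [abs_sub_le_iff]
  constructor <;> linarith

theorem abs_apply_sub_logb_le_one_div (hmono : ∀ a b : ℕ, 1 ≤ a → a ≤ b → L a ≤ L b)
    (h2pow : ∀ k : ℕ, L (2 ^ k) = k) (hpow : ∀ n m : ℕ, 1 ≤ n → 1 ≤ m → L (n ^ m) = m * L n)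
    {n m : ℕ} (hn : 1 ≤ n) (hm : 1 ≤ m) : |L n - logb 2 n| ≤ 1 / m := by
  have hm₀ : (0 : ℝ) < m := by exact_mod_cast hm
  have h := abs_apply_sub_logb_le_one hmono h2pow (Nat.one_le_pow m n hn)
  rw [hpow n m hn hm, Nat.cast_pow, logb_pow, ← mul_sub, abs_mul, Nat.abs_cast] at h
  rw [le_div_iff₀ hm₀]
  linarith

end LogLike

/-- For n ≥ 2, m ≥ 1 and k = ⌊m log₂ n⌋ we have |m log₂ n − k| ≤ 1 and
2^k ≤ n^m ≤ 2^(k+1); consequently any non-decreasing L with L(n^m) = m L(n) and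
L(2^k) = k satisfies |L(n) − log₂ n| ≤ 1/m for every m, hence L(n) = log₂ n. -/
theorem sandwich_logb (L : ℕ → ℝ)
    (hmono : ∀ a b : ℕ, 1 ≤ a → a ≤ b → L a ≤ L b)
    (hpow : ∀ n m : ℕ, 1 ≤ n → 1 ≤ m → L (n ^ m) = m * L n)
    (h2pow : ∀ k : ℕ, L (2 ^ k) = k) :
    ∀ n : ℕ, 2 ≤ n →
      (∀ m : ℕ, 1 ≤ m →
        |(m : ℝ) * Real.logb 2 n - (⌊(m : ℝ) * Real.logb 2 n⌋₊ : ℝ)| ≤ 1 ∧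
        2 ^ (⌊(m : ℝ) * Real.logb 2 n⌋₊) ≤ n ^ m ∧
        n ^ m ≤ 2 ^ (⌊(m : ℝ) * Real.logb 2 n⌋₊ + 1) ∧
        |L n - Real.logb 2 n| ≤ 1 / m) ∧
      L n = Real.logb 2 n := by
  intro n hn
  have hn₁ : 1 ≤ n := by omega
  have hdist m (hm : 1 ≤ m) := abs_apply_sub_logb_le_one_div hmono h2pow hpow hn₁ hm
  refine ⟨fun m hm => ?_, eq_of_forall_abs_sub_le_one_div hdist⟩
  have hfloor : ⌊(m : ℝ) * logb 2 n⌋₊ = Nat.log 2 (n ^ m) := by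
    exact_mod_cast natFloor_mul_logb_eq_log_pow 2 n m
  refine ⟨abs_sub_natFloor_le_one ?_, ?_, ?_, hdist m hm⟩
  · exact mul_nonneg m.cast_nonneg (logb_nonneg one_lt_two (by exact_mod_cast hn₁))
  · rw [hfloor]
    exact Nat.pow_log_le_self 2 (pow_ne_zero m (by omega))
  · rw [hfloor]
    exact (Nat.lt_pow_succ_log_self one_lt_two _).le
end
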